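/- In Thompson's group F with relations xₙxₖ = xₖxₙ₊₁ for k < n, every element of the submonoid generated by {x₀, x₁, x₂, …} can be written in the form x₀^{a₀} x₁^{a₁} ⋯ xₙ^{aₙ} with a₀,…,aₙ ∈ ℕ. -/
import Mathlib


/-- The defining relations of Thompson's group `F`:
`xₙ xₖ = xₖ xₙ₊₁` for all `k < n`. -/
def thompsonRels : Set (FreeGroup ℕ) :=
  {r | ∃ n k : ℕ, k < n ∧
    r = FreeGroup.of n * FreeGroup.of k * (FreeGroup.of k * FreeGroup.of (n + 1))⁻¹}

/-- Thompson's group `F` as a presented group. -/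
abbrev ThompsonF : Type := PresentedGroup thompsonRels

/-- The generators `xᵢ` of Thompson's group `F`. -/
def x (i : ℕ) : ThompsonF := PresentedGroup.of i

lemma x_comm {m k : ℕ} (h : k < m) : x m * x k = x k * x (m + 1) := by
  have hr : (FreeGroup.of m * FreeGroup.of k * (FreeGroup.of k * FreeGroup.of (m+1))⁻¹)
      ∈ thompsonRels := ⟨m, k, h, rfl⟩
  have h1 : (PresentedGroup.mk thompsonRels
      (FreeGroup.of m * FreeGroup.of k * (FreeGroup.of k * FreeGroup.of (m+1))⁻¹)) = 1 := by
    have := Subgroup.subset_normalClosure (s := thompsonRels) hr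
    exact (QuotientGroup.eq_one_iff _).mpr this
  have h2 : x m * x k * (x k * x (m+1))⁻¹ = 1 := by
    simpa [x, PresentedGroup.of, map_mul, map_inv] using h1
  exact mul_inv_eq_one.mp h2

lemma x_pow_comm {m k : ℕ} (h : k < m) (a : ℕ) : x m * x k ^ a = x k ^ a * x (m + a) := by
  induction a generalizing m with
  | zero => simp
  | succ a ih =>
    have hk : k < m + 1 := Nat.lt_succ_of_lt h
    rw [pow_succ', ← mul_assoc, x_comm h, mul_assoc, ih hk, ← mul_assoc, ← pow_succ']
    congr 2
    omega

/-- `x j ^ a j * x (j+1) ^ a (j+1) * ⋯ * x (j+n-1) ^ a (j+n-1)`. -/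
def prodRange (j n : ℕ) (a : ℕ → ℕ) : ThompsonF :=
  ((List.range' j n).map fun i => x i ^ a i).prod

lemma prodRange_succ (j n : ℕ) (a : ℕ → ℕ) :
    prodRange j (n+1) a = x j ^ a j * prodRange (j+1) n a := by
  simp [prodRange, List.range'_succ]

lemma prodRange_congr {j n : ℕ} {a b : ℕ → ℕ}
    (h : ∀ i, j ≤ i → i < j + n → a i = b i) : prodRange j n a = prodRange j n b := by
  unfold prodRange
  congr 1
  apply List.map_congr_left
  intro i hi
  rw [List.mem_range'_1] at hi
  rw [h i hi.1 hi.2]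

lemma prodRange_single (j d : ℕ) :
    prodRange j (d+1) (fun i => if i = j + d then 1 else 0) = x (j + d) := by
  induction d generalizing j with
  | zero => simp [prodRange_succ, prodRange]
  | succ d ih =>
    rw [prodRange_succ]
    have h1 : (if j = j + (d+1) then 1 else 0) = 0 := by
      rw [if_neg]; omega
    have h2 : prodRange (j+1) (d+1) (fun i => if i = j + (d+1) then 1 else 0)
        = x (j + (d+1)) := by
      have := ih (j+1)
      have e : (j+1) + d = j + (d+1) := by omega
      rw [e] at this
      exact this
    rw [h1, h2, pow_zero, one_mul]

lemma push : ∀ n j m (a : ℕ → ℕ), j ≤ m →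
    ∃ n' a', x m * prodRange j n a = prodRange j (n'+1) a' := by
  intro n
  induction n with
  | zero =>
    intro j m a h
    refine ⟨m - j, fun i => if i = m then 1 else 0, ?_⟩
    have hs := prodRange_single j (m - j)
    rw [Nat.add_sub_cancel' h] at hs
    rw [hs]
    simp [prodRange]
  | succ n ih =>
    intro j m a h
    rcases eq_or_lt_of_le h with heq | hlt
    · subst heq
      refine ⟨n, Function.update a j (a j + 1), ?_⟩
      have e2 : prodRange (j+1) n (Function.update a j (a j + 1)) = prodRange (j+1) n a :=
        prodRange_congr fun i hi1 hi2 => Function.update_of_ne (by omega) _ _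
      rw [prodRange_succ, prodRange_succ, ← mul_assoc, ← pow_succ', Function.update_self, e2]
    · rw [prodRange_succ, ← mul_assoc, x_pow_comm hlt, mul_assoc]
      obtain ⟨n', a', hn⟩ := ih (j+1) (m + a j) a (by omega)
      rw [hn]
      refine ⟨n'+1, Function.update a' j (a j), ?_⟩
      have e2 : prodRange (j+1) (n'+1) (Function.update a' j (a j)) = prodRange (j+1) (n'+1) a' :=
        prodRange_congr fun i hi1 hi2 => Function.update_of_ne (by omega) _ _
      conv_rhs => rw [prodRange_succ, Function.update_self]
      rw [e2]

/-- Every element of the positive monoid `F₊` (the submonoid generated by the `xᵢ`)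
can be written in the form `x₀^{a₀} x₁^{a₁} ⋯ xₙ^{aₙ}` with natural exponents. -/
theorem positive_normal_form (g : ThompsonF) (hg : g ∈ Submonoid.closure (Set.range x)) :
    ∃ (n : ℕ) (a : ℕ → ℕ), g = ((List.range (n + 1)).map (fun i => x i ^ a i)).prod := by
  have key : ∀ g ∈ Submonoid.closure (Set.range x),
      ∀ n (a : ℕ → ℕ), ∃ n' a', g * prodRange 0 (n+1) a = prodRange 0 (n'+1) a' := by
    intro g hg
    induction hg using Submonoid.closure_induction with
    | one => exact fun n a => ⟨n, a, one_mul _⟩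
    | mem y hy =>
      obtain ⟨k, rfl⟩ := hy
      exact fun n a => push (n+1) 0 k a (Nat.zero_le k)
    | mul y z hy hz ihy ihz =>
      intro n a
      obtain ⟨n1, a1, h1⟩ := ihz n a
      obtain ⟨n2, a2, h2⟩ := ihy n1 a1
      exact ⟨n2, a2, by rw [mul_assoc, h1, h2]⟩
  obtain ⟨n', a', hrw⟩ := key g hg 0 (fun _ => 0)
  refine ⟨n', a', ?_⟩
  have h0 : prodRange 0 1 (fun _ => 0) = 1 := by simp [prodRange]
  have : ((List.range (n'+1)).map fun i => x i ^ a' i).prod = prodRange 0 (n'+1) a' := by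
    rw [prodRange, List.range_eq_range']
  rw [this, ← hrw, h0, mul_one]
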